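/- The complement of a cycle of even length is vertex decomposable. -/

import Mathlib

open SimpleGraph

variable {V : Type*}

/-- `S` is an independent set of `G`: no two (distinct) members are adjacent. -/
def IsIndepOn (G : SimpleGraph V) (S : Set V) : Prop :=
  S.Pairwise fun u w => ¬ G.Adj u w

/-- The closed neighborhood `N_G[v]` of `v` in `G`. -/
def closedNbhd (G : SimpleGraph V) (v : V) : Set V :=
  {u | G.Adj v u} ∪ {v}

/-- Vertex decomposability of the independence complex of the induced subgraph of `G`
on the vertex set `A`. -/
inductive VertexDecomp (G : SimpleGraph V) : Set V → Prop
  | discrete (A : Set V) (h : ∀ u ∈ A, ∀ w ∈ A, ¬ G.Adj u w) : VertexDecomp G A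
  | shed (A : Set V) (v : V) (hv : v ∈ A)
      (hshed : ∀ S : Set V, S ⊆ A \ closedNbhd G v → IsIndepOn G S →
        ∃ x ∈ A, G.Adj v x ∧ IsIndepOn G (insert x S))
      (hdel : VertexDecomp G (A \ {v}))
      (hlink : VertexDecomp G (A \ closedNbhd G v)) : VertexDecomp G A

/-- `v` is a shedding vertex of `H`: every independent set avoiding `N_H[v]` can be
extended by a neighbor of `v` to an independent set of `H \ {v}`. -/
def IsSheddingVertex (H : SimpleGraph V) (v : V) : Prop :=
  ∀ S : Set V, S ∩ closedNbhd H v = ∅ → IsIndepOn H S →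
    ∃ x, H.Adj v x ∧ IsIndepOn H (insert x S)

/-!
In the complement of a graph `G`, the vertices outside the closed neighbourhood of `v` are the
`G`-neighbours of `v`; for the cycle `C_N` with `N ≥ 4` they form a clique of the complement of
size at most two. The independence complex of a finite clique is a set of points, and a vertex
whose link is a clique is shedding as soon as each vertex `w` of the link misses some neighbour
of `v`, because independent subsets of a clique have at most one element. Shedding `0` leaves the
complement of the path `1, …, N - 1`, which is peeled off from one end in the same way. For
`N ≤ 3` the cycle is complete and its complement has no edges.
-/

open Set

namespace VertexDecomp

variable {G : SimpleGraph V} {A : Set V}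

theorem of_subsingleton (hA : A.Subsingleton) : VertexDecomp G A :=
  discrete A fun _ hu _ hw h => G.ne_of_adj h (hA hu hw)

theorem of_isClique (hA : A.Finite) (hc : G.IsClique A) : VertexDecomp G A := by
  induction A, hA using Set.Finite.induction_on with
  | empty => exact of_subsingleton subsingleton_empty
  | @insert a s ha _ ih =>
    obtain rfl | ⟨x, hx⟩ := s.eq_empty_or_nonempty
    · exact of_subsingleton (by simp)
    have hadj : ∀ y ∈ s, G.Adj a y := fun y hy =>
      hc (mem_insert a s) (mem_insert_of_mem a hy) (ne_of_mem_of_not_mem hy ha).symm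
    have hlink : insert a s \ closedNbhd G a = ∅ := by
      refine eq_empty_of_forall_notMem fun y ⟨hy, hyN⟩ => hyN ?_
      rcases hy with rfl | hy
      · exact Or.inr rfl
      · exact Or.inl (hadj y hy)
    refine shed _ a (mem_insert a s) (fun S hS _ => ?_) ?_ ?_
    · rw [hlink, subset_empty_iff] at hS
      exact ⟨x, mem_insert_of_mem a hx, hadj x hx, by simp [hS, IsIndepOn]⟩
    · rw [insert_sdiff_self_of_notMem ha]
      exact ih (hc.subset (subset_insert a s))
    · rw [hlink]
      exact of_subsingleton subsingleton_empty

theorem of_isClique_link {v : V} (hv : v ∈ A) (hfin : (A \ closedNbhd G v).Finite)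
    (hclique : G.IsClique (A \ closedNbhd G v)) (hne : (A \ closedNbhd G v).Nonempty)
    (hwit : ∀ w ∈ A \ closedNbhd G v, ∃ x ∈ A, G.Adj v x ∧ ¬ G.Adj x w)
    (hdel : VertexDecomp G (A \ {v})) : VertexDecomp G A := by
  refine shed A v hv (fun S hS hSind => ?_) hdel (of_isClique hfin hclique)
  have hS1 : S.Subsingleton := fun a ha b hb => by
    by_contra hab
    exact hSind ha hb hab (hclique (hS ha) (hS hb) hab)
  obtain rfl | ⟨w, rfl⟩ := hS1.eq_empty_or_singleton
  · obtain ⟨w, hw⟩ := hne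
    obtain ⟨x, hxA, hvx, -⟩ := hwit w hw
    exact ⟨x, hxA, hvx, by simp [IsIndepOn]⟩
  · obtain ⟨x, hxA, hvx, hxw⟩ := hwit w (hS rfl)
    exact ⟨x, hxA, hvx, pairwise_pair.2 fun _ => ⟨hxw, fun h => hxw h.symm⟩⟩

end VertexDecomp

theorem mem_diff_closedNbhd_compl {G : SimpleGraph V} {A : Set V} {v x : V} :
    x ∈ A \ closedNbhd Gᶜ v ↔ x ∈ A ∧ G.Adj v x := by
  simp only [closedNbhd, mem_sdiff, mem_union, mem_ofPred_eq, mem_singleton_iff, compl_adj]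
  rcases eq_or_ne x v with rfl | hxv
  · simp
  · simp [hxv, hxv.symm]

theorem cycleGraph_adj_iff_val {N : ℕ} (hN : 2 ≤ N) {u v : Fin N} :
    (cycleGraph N).Adj u v ↔ u.val + 1 = v.val ∨ v.val + 1 = u.val ∨
      (u.val = 0 ∧ v.val + 1 = N) ∨ (v.val = 0 ∧ u.val + 1 = N) := by
  have hu := u.isLt
  have hv := v.isLt
  have hmod : ∀ a, a < 2 * N → a % N = if a < N then a else a - N := fun a ha => by
    split_ifs with h
    · exact Nat.mod_eq_of_lt h
    · rw [Nat.mod_eq_sub_mod (by omega), Nat.mod_eq_of_lt (by omega)]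
  rw [cycleGraph_adj', Fin.val_sub, Fin.val_sub, hmod _ (by omega), hmod _ (by omega)]
  split_ifs <;> omega

section CycleComplement

variable {N : ℕ}

theorem vertexDecomp_compl_cycleGraph_arc (hN : 4 ≤ N) (k : ℕ) (hk : 1 ≤ k) :
    VertexDecomp (cycleGraph N)ᶜ {x : Fin N | k ≤ x.val} := by
  have hcyc := fun u v : Fin N => cycleGraph_adj_iff_val (u := u) (v := v) (by omega : 2 ≤ N)
  by_cases hshort : N ≤ k + 2
  -- at most the two cycle-adjacent vertices `N - 2`, `N - 1` are left
  · refine .discrete _ fun u hu w hw h => ?_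
    simp only [mem_ofPred_eq, compl_adj, hcyc, ne_eq, Fin.ext_iff] at hu hw h
    omega
  refine .of_isClique_link (v := ⟨k, by omega⟩) (by simp) (toFinite _) ?_ ?_ ?_ ?_
  · intro u hu w hw hne
    simp only [mem_diff_closedNbhd_compl, mem_ofPred_eq, hcyc] at hu hw
    simp only [compl_adj, hcyc, ne_eq, Fin.ext_iff] at hne ⊢
    omega
  · exact ⟨⟨k + 1, by omega⟩, mem_diff_closedNbhd_compl.2 ⟨by simp, (hcyc _ _).2 (.inl rfl)⟩⟩
  · intro w hw
    simp only [mem_diff_closedNbhd_compl, mem_ofPred_eq, hcyc] at hw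
    refine ⟨⟨k + 2, by omega⟩, by simp, ?_, ?_⟩ <;>
      simp only [compl_adj, hcyc, ne_eq, Fin.ext_iff] <;> omega
  · have hdel : {x : Fin N | k ≤ x.val} \ {⟨k, by omega⟩} = {x : Fin N | k + 1 ≤ x.val} := by
      ext x
      simp only [mem_sdiff, mem_ofPred_eq, mem_singleton_iff, Fin.ext_iff]
      omega
    rw [hdel]
    exact vertexDecomp_compl_cycleGraph_arc hN (k + 1) (by omega)
termination_by N - k

theorem vertexDecomp_compl_cycleGraph_of_four_le (hN : 4 ≤ N) :
    VertexDecomp (cycleGraph N)ᶜ univ := by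
  have hcyc := fun u v : Fin N => cycleGraph_adj_iff_val (u := u) (v := v) (by omega : 2 ≤ N)
  refine .of_isClique_link (v := ⟨0, by omega⟩) (mem_univ _) (toFinite _) ?_ ?_ ?_ ?_
  · intro u hu w hw hne
    simp only [mem_diff_closedNbhd_compl, mem_univ, true_and, hcyc] at hu hw
    simp only [compl_adj, hcyc, ne_eq, Fin.ext_iff] at hne ⊢
    omega
  · exact ⟨⟨1, by omega⟩, mem_diff_closedNbhd_compl.2 ⟨mem_univ _, (hcyc _ _).2 (.inl rfl)⟩⟩
  · intro w hw
    simp only [mem_diff_closedNbhd_compl, mem_univ, true_and, hcyc] at hw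
    -- the cycle neighbour of `w ∈ {1, N - 1}` other than `0`
    obtain ⟨x, hx⟩ : ∃ x : Fin N, x.val = if w.val = 1 then 2 else N - 2 :=
      ⟨⟨if w.val = 1 then 2 else N - 2, by split_ifs <;> omega⟩, rfl⟩
    refine ⟨x, mem_univ _, ?_, ?_⟩ <;>
      simp only [compl_adj, hcyc, ne_eq, Fin.ext_iff] <;> split_ifs at hx <;> omega
  · have hdel : univ \ {⟨0, by omega⟩} = {x : Fin N | 1 ≤ x.val} := by
      ext x
      simp only [mem_sdiff, mem_univ, true_and, mem_ofPred_eq, mem_singleton_iff, Fin.ext_iff]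
      omega
    rw [hdel]
    exact vertexDecomp_compl_cycleGraph_arc hN 1 le_rfl

end CycleComplement

theorem vertexDecomp_compl_cycleGraph (N : ℕ) : VertexDecomp (cycleGraph N)ᶜ univ := by
  rcases lt_or_ge N 4 with hN | hN
  · have htop : cycleGraph N = ⊤ := by
      interval_cases N
      exacts [cycleGraph_zero_eq_top, cycleGraph_one_eq_top, cycleGraph_two_eq_top,
        cycleGraph_three_eq_top]
    rw [htop, compl_top]
    exact .discrete _ fun _ _ _ _ => id
  · exact vertexDecomp_compl_cycleGraph_of_four_le hN

theorem complement_even_cycle_vertexDecomposable_general (n : ℕ) :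
    VertexDecomp (SimpleGraph.cycleGraph (2 * n))ᶜ Set.univ :=
  vertexDecomp_compl_cycleGraph (2 * n)

theorem complement_even_cycle_vertexDecomposable (n : ℕ) (hn : 2 ≤ n) :
    VertexDecomp (SimpleGraph.cycleGraph (2 * n))ᶜ Set.univ :=
  complement_even_cycle_vertexDecomposable_general n
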